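/- arXiv:1908.11639 — 4 statements merged into one kernel-verified Lean document; each statement's English description precedes it below -/
import Mathlib

section
/- For all natural numbers m ≥ 1 and k ≥ 0, Γ((3k+m)/4) ≤ 8^{m/4} · (6k/7)^{3k/4} · e^{−3k/4} · Γ(m/4), where Γ is the Gamma function (with the convention that (6k/7)^{3k/4}=1 when k=0). -/
/-! Write `exp (-t) = exp (-c t) · exp (-(1 - c) t)` in the integral for `Γ(a + s)` and bound
`t ^ a · exp (-c t)` by its maximum `(a / c) ^ a · exp (-a)`, attained at `t = a / c`; what is left
integrates to `(1 - c) ^ (-s) Γ(s)`. The theorem is the case `a = 3k/4`, `s = m/4`, `c = 7/8`. -/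

open Real Set MeasureTheory

lemma Real.rpow_mul_exp_neg_mul_le {a c x : ℝ} (ha : 0 ≤ a) (hc : 0 < c) (hx : 0 ≤ x) :
    x ^ a * exp (-(c * x)) ≤ (a / c) ^ a * exp (-a) := by
  rcases ha.eq_or_lt with rfl | ha
  · simpa using mul_nonneg hc.le hx
  have hy : 0 ≤ c * x / a := by positivity
  have hpow : (c * x / a) ^ a ≤ exp (c * x - a) := calc
    (c * x / a) ^ a ≤ exp (c * x / a - 1) ^ a :=
      rpow_le_rpow hy (by linarith [add_one_le_exp (c * x / a - 1)]) ha.le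
    _ = exp (c * x - a) := by rw [← exp_mul]; congr 1; field_simp
  calc x ^ a * exp (-(c * x)) = (a / c) ^ a * ((c * x / a) ^ a * exp (-(c * x))) := by
        rw [← mul_assoc, ← mul_rpow (by positivity) hy]; field_simp
    _ ≤ (a / c) ^ a * (exp (c * x - a) * exp (-(c * x))) := by gcongr
    _ = (a / c) ^ a * exp (-a) := by rw [← exp_add]; ring_nf

lemma Real.Gamma_add_le {a s c : ℝ} (ha : 0 ≤ a) (hs : 0 < s) (hc : 0 < c) (hc1 : c < 1) :
    Gamma (a + s) ≤ (a / c) ^ a * exp (-a) * ((1 / (1 - c)) ^ s * Gamma s) := by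
  have hc' : 0 < 1 - c := sub_pos.2 hc1
  have hint : IntegrableOn (fun x ↦ x ^ (s - 1) * exp (-((1 - c) * x))) (Ioi 0) :=
    .of_integral_ne_zero <| by rw [integral_rpow_mul_exp_neg_mul_Ioi hs hc']; positivity
  rw [Gamma_eq_integral (by positivity), ← integral_rpow_mul_exp_neg_mul_Ioi hs hc',
    ← integral_const_mul]
  refine setIntegral_mono_on (GammaIntegral_convergent (by positivity)) (hint.const_mul _)
    measurableSet_Ioi fun x (hx : 0 < x) ↦ ?_
  calc exp (-x) * x ^ (a + s - 1)
      = x ^ a * exp (-(c * x)) * (x ^ (s - 1) * exp (-((1 - c) * x))) := by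
        rw [add_sub_assoc, rpow_add hx, mul_mul_mul_comm, ← exp_add]; ring_nf
    _ ≤ (a / c) ^ a * exp (-a) * (x ^ (s - 1) * exp (-((1 - c) * x))) :=
        mul_le_mul_of_nonneg_right (rpow_mul_exp_neg_mul_le ha hc hx.le) (by positivity)

/-- For natural numbers `m ≥ 1` and `k ≥ 0`,
`Γ((3k+m)/4) ≤ 8^{m/4} (6k/7)^{3k/4} e^{-3k/4} Γ(m/4)`
(with the convention `(6·0/7)^0 = 1`, which holds for `rpow`). -/
theorem gamma_shift_bound (m k : ℕ) (hm : 1 ≤ m) :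
    Real.Gamma ((3 * k + m : ℝ) / 4) ≤
      (8 : ℝ) ^ ((m : ℝ) / 4) * (6 * (k : ℝ) / 7) ^ ((3 * (k : ℝ)) / 4) *
        Real.exp (-(3 * (k : ℝ)) / 4) * Real.Gamma ((m : ℝ) / 4) := by
  have hs : (0 : ℝ) < m / 4 := by have : (0 : ℝ) < m := Nat.cast_pos.2 hm; positivity
  calc Gamma ((3 * k + m : ℝ) / 4) = Gamma (3 * k / 4 + m / 4) := by ring_nf
    _ ≤ (3 * k / 4 / (7 / 8)) ^ (3 * k / 4 : ℝ) * exp (-(3 * k / 4)) *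
          ((1 / (1 - 7 / 8)) ^ (m / 4 : ℝ) * Gamma (m / 4)) :=
        Gamma_add_le (by positivity) hs (by norm_num) (by norm_num)
    _ = _ := by norm_num; ring_nf
end

section
/- Let n ≥ 1, α > 0, γ ∈ ℝ, and let f : ℝ → ℝ be a measurable function with x ↦ f(x)/(1+x²)^α integrable on ℝ. Set 𝔡(θ) := cos^{2n−2}θ · (cos²θ + 2 sin²θ) and A(θ) := cos⁴θ + (cos²θ · γ + sin θ)². Then ∫_{−π/2}^{π/2} 𝔡(θ) · cos^{4α−2n−1}θ · f(sin θ / cos²θ) / A(θ)^α dθ = ∫_{−∞}^{∞} f(x) / (1 + (x+γ)²)^α dx. -/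
/-!
The map `θ ↦ sin θ / cos² θ = tan θ sec θ` is a strictly increasing bijection of `(-π/2, π/2)`
onto `ℝ` with derivative `(cos² θ + 2 sin² θ) / cos³ θ`. Since
`cos⁴ θ + (cos² θ γ + sin θ)² = cos⁴ θ (1 + (sin θ / cos² θ + γ)²)`, the integrand on the left is
this Jacobian times the right-hand integrand evaluated at `sin θ / cos² θ`, and the identity is
the change of variables formula.
-/

open Real MeasureTheory Set Filter Topology

namespace Real

noncomputable def tanSec (θ : ℝ) : ℝ := sin θ / cos θ ^ 2

lemma tanSec_eq_tan_mul_inv_cos : tanSec = tan * cos⁻¹ := by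
  ext θ
  rw [tanSec, Pi.mul_apply, Pi.inv_apply, tan_eq_sin_div_cos]
  ring

lemma hasDerivAt_tanSec {θ : ℝ} (h : cos θ ≠ 0) :
    HasDerivAt tanSec ((cos θ ^ 2 + 2 * sin θ ^ 2) / cos θ ^ 3) θ := by
  have hcos_sq : HasDerivAt (fun x => cos x ^ 2) (2 * cos θ * -sin θ) θ := by
    simpa using (hasDerivAt_cos θ).fun_pow 2
  refine ((hasDerivAt_sin θ).div hcos_sq (pow_ne_zero 2 h)).congr_deriv ?_
  field_simp
  ring

lemma continuousOn_tanSec : ContinuousOn tanSec (Ioo (-(π / 2)) (π / 2)) := fun _ hθ =>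
  (hasDerivAt_tanSec (cos_pos_of_mem_Ioo hθ).ne').continuousAt.continuousWithinAt

lemma strictMonoOn_tanSec : StrictMonoOn tanSec (Ioo (-(π / 2)) (π / 2)) := by
  refine strictMonoOn_of_hasDerivWithinAt_pos (convex_Ioo _ _) continuousOn_tanSec
    (f' := fun θ => (cos θ ^ 2 + 2 * sin θ ^ 2) / cos θ ^ 3) (fun θ hθ => ?_) (fun θ hθ => ?_) <;>
    simp only [interior_Ioo] at hθ ⊢ <;> have hcos := cos_pos_of_mem_Ioo hθ
  · exact (hasDerivAt_tanSec hcos.ne').hasDerivWithinAt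
  · positivity

lemma tendsto_tanSec_pi_div_two : Tendsto tanSec (𝓝[<] (π / 2)) atTop := by
  rw [tanSec_eq_tan_mul_inv_cos]
  exact tendsto_tan_pi_div_two.atTop_mul_atTop₀ tendsto_cos_pi_div_two.inv_tendsto_nhdsGT_zero

lemma tendsto_tanSec_neg_pi_div_two : Tendsto tanSec (𝓝[>] (-(π / 2))) atBot := by
  rw [tanSec_eq_tan_mul_inv_cos]
  exact tendsto_tan_neg_pi_div_two.atBot_mul_atTop₀
    tendsto_cos_neg_pi_div_two.inv_tendsto_nhdsGT_zero

lemma image_tanSec_Ioo : tanSec '' Ioo (-(π / 2)) (π / 2) = univ := by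
  have hlt := neg_lt_self pi_div_two_pos
  refine univ_subset_iff.mp (continuousOn_tanSec.surjOn_of_tendsto (nonempty_Ioo.2 hlt) ?_ ?_)
  · rw [tendsto_comp_coe_Ioo_atBot hlt]
    exact tendsto_tanSec_neg_pi_div_two
  · rw [tendsto_comp_coe_Ioo_atTop hlt]
    exact tendsto_tanSec_pi_div_two

theorem integral_eq_integral_Ioo_comp_tanSec {E : Type*} [NormedAddCommGroup E]
    [NormedSpace ℝ E] (g : ℝ → E) :
    ∫ x, g x = ∫ θ in Ioo (-(π / 2)) (π / 2),
      ((cos θ ^ 2 + 2 * sin θ ^ 2) / cos θ ^ 3) • g (tanSec θ) := by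
  rw [← setIntegral_univ, ← image_tanSec_Ioo, integral_image_eq_integral_abs_deriv_smul
    measurableSet_Ioo
    (fun θ hθ => (hasDerivAt_tanSec (cos_pos_of_mem_Ioo hθ).ne').hasDerivWithinAt)
    strictMonoOn_tanSec.injOn]
  refine setIntegral_congr_fun measurableSet_Ioo fun θ hθ => ?_
  have := cos_pos_of_mem_Ioo hθ
  rw [abs_of_pos (by positivity)]

end Real

lemma integrand_eq_jacobian_mul {n : ℕ} (hn : 1 ≤ n) (α γ y : ℝ) {c s : ℝ} (hc : 0 < c) :
    (c ^ (2 * n - 2) * (c ^ 2 + 2 * s ^ 2)) * (c ^ (4 * α - 2 * (n : ℝ) - 1) * y) /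
        (c ^ 4 + (c ^ 2 * γ + s) ^ 2) ^ α =
      (c ^ 2 + 2 * s ^ 2) / c ^ 3 * (y / (1 + (s / c ^ 2 + γ) ^ 2) ^ α) := by
  have hA : c ^ 4 + (c ^ 2 * γ + s) ^ 2 = c ^ 4 * (1 + (s / c ^ 2 + γ) ^ 2) := by
    field_simp
    ring
  have hApow : (c ^ 4 + (c ^ 2 * γ + s) ^ 2) ^ α = c ^ (4 * α) * (1 + (s / c ^ 2 + γ) ^ 2) ^ α := by
    rw [hA, mul_rpow (by positivity) (by positivity), ← rpow_natCast c 4, ← rpow_mul hc.le]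
    norm_num
  have hexp : c ^ (2 * n - 2) * c ^ (4 * α - 2 * (n : ℝ) - 1) = c ^ (4 * α) / c ^ 3 := by
    rw [← rpow_natCast c (2 * n - 2), ← rpow_add hc, ← rpow_natCast c 3, ← rpow_sub hc]
    push_cast [Nat.cast_sub (by omega : 2 ≤ 2 * n)]
    ring_nf
  calc (c ^ (2 * n - 2) * (c ^ 2 + 2 * s ^ 2)) * (c ^ (4 * α - 2 * (n : ℝ) - 1) * y) /
        (c ^ 4 + (c ^ 2 * γ + s) ^ 2) ^ α
      = (c ^ (2 * n - 2) * c ^ (4 * α - 2 * (n : ℝ) - 1)) * (c ^ 2 + 2 * s ^ 2) * y /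
        (c ^ (4 * α) * (1 + (s / c ^ 2 + γ) ^ 2) ^ α) := by rw [hApow]; ring
    _ = (c ^ 2 + 2 * s ^ 2) / c ^ 3 * (y / (1 + (s / c ^ 2 + γ) ^ 2) ^ α) := by
      rw [hexp]
      field_simp

theorem integral_change_of_variable_tan_like_general (n : ℕ) (hn : 1 ≤ n) (α γ : ℝ)
    (f : ℝ → ℝ) :
    ∫ θ in (-(π/2))..(π/2),
      (Real.cos θ ^ (2*n-2) * (Real.cos θ ^ 2 + 2 * Real.sin θ ^ 2)) *
        (Real.cos θ ^ (4*α - 2*(n:ℝ) - 1) * f (Real.sin θ / Real.cos θ ^ 2)) /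
          (Real.cos θ ^ 4 + (Real.cos θ ^ 2 * γ + Real.sin θ) ^ 2) ^ α =
    ∫ x : ℝ, f x / (1 + (x + γ) ^ 2) ^ α := by
  rw [integral_eq_integral_Ioo_comp_tanSec (fun x => f x / (1 + (x + γ) ^ 2) ^ α),
    intervalIntegral.integral_of_le (by linarith [pi_pos]), integral_Ioc_eq_integral_Ioo]
  exact setIntegral_congr_fun measurableSet_Ioo fun θ hθ =>
    integrand_eq_jacobian_mul hn α γ _ (cos_pos_of_mem_Ioo hθ)

/-- Change of variable `x = sin θ / cos²θ`: for `n ≥ 1`, `α > 0`, `γ ∈ ℝ`, and `f`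
measurable with `f(x)/(1+x²)^α` integrable,
`∫_{-π/2}^{π/2} 𝔡(θ) cos^{4α-2n-1}θ f(sinθ/cos²θ)/A(θ)^α dθ = ∫ f(x)/(1+(x+γ)²)^α dx`,
where `𝔡(θ) = cos^{2n-2}θ (cos²θ + 2sin²θ)` and `A(θ) = cos⁴θ + (cos²θ·γ + sinθ)²`. -/
theorem integral_change_of_variable_tan_like (n : ℕ) (hn : 1 ≤ n) (α γ : ℝ) (hα : 0 < α)
    (f : ℝ → ℝ) (hf : Measurable f)
    (hint : Integrable (fun x : ℝ => f x / (1 + x ^ 2) ^ α)) :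
    ∫ θ in (-(π/2))..(π/2),
      (Real.cos θ ^ (2*n-2) * (Real.cos θ ^ 2 + 2 * Real.sin θ ^ 2)) *
        (Real.cos θ ^ (4*α - 2*(n:ℝ) - 1) * f (Real.sin θ / Real.cos θ ^ 2)) /
          (Real.cos θ ^ 4 + (Real.cos θ ^ 2 * γ + Real.sin θ) ^ 2) ^ α =
    ∫ x : ℝ, f x / (1 + (x + γ) ^ 2) ^ α :=
  integral_change_of_variable_tan_like_general n hn α γ f
end

section
/- Let A be a symmetric 2n×2n real matrix and B an invertible antisymmetric 2n×2n real matrix. Then the kernel of A − B has dimension at most n. -/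
/-!
For `v, w ∈ ker (A - B)` the number `⟪v, B w⟫ = ⟪v, A w⟫` is symmetric in `(v, w)` because `A` is,
and antisymmetric because `B` is, hence zero. So the kernel is totally isotropic for the
nondegenerate bilinear form `(v, w) ↦ ⟪v, B w⟫`, and a totally isotropic subspace has at most
half the dimension of the whole space.
-/

open Matrix Module

namespace LinearMap.BilinForm

variable {K V : Type*} [Field K] [AddCommGroup V] [Module K V] [FiniteDimensional K V]

theorem two_mul_finrank_le_of_le_orthogonal {B : LinearMap.BilinForm K V} (hB : B.Nondegenerate)
    {W : Submodule K V} (hW : W ≤ B.orthogonal W) :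
    2 * finrank K W ≤ finrank K V := by
  have hle := Submodule.finrank_mono hW
  rw [finrank_orthogonal hB] at hle
  have hW_le := Submodule.finrank_le W
  omega

end LinearMap.BilinForm

namespace Matrix

variable {R ι : Type*} [CommRing R] [Fintype ι] [DecidableEq ι]

theorem ker_toLin'_sub_le_orthogonal [IsAddTorsionFree R] {A B : Matrix ι ι R}
    (hA : A.IsSymm) (hB : Bᵀ = -B) :
    LinearMap.ker (toLin' (A - B)) ≤ B.toBilin'.orthogonal (LinearMap.ker (toLin' (A - B))) := by
  intro w hw
  rw [LinearMap.BilinForm.mem_orthogonal_iff]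
  intro v hv
  rw [LinearMap.mem_ker, toLin'_apply, sub_mulVec, sub_eq_zero] at hv hw
  have hsymm : v ⬝ᵥ B *ᵥ w = -(v ⬝ᵥ B *ᵥ w) :=
    calc v ⬝ᵥ B *ᵥ w = v ⬝ᵥ A *ᵥ w := by rw [hw]
      _ = A *ᵥ v ⬝ᵥ w := by rw [dotProduct_mulVec, ← hA.eq, vecMul_transpose, hA.eq]
      _ = v ⬝ᵥ Bᵀ *ᵥ w := by rw [hv, dotProduct_mulVec, vecMul_transpose]
      _ = -(v ⬝ᵥ B *ᵥ w) := by rw [hB, neg_mulVec, dotProduct_neg]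
  rw [toBilin'_apply']
  exact self_eq_neg.mp hsymm

end Matrix

/-- If `A` is a symmetric `2n×2n` real matrix and `B` an invertible antisymmetric one,
then the kernel of `A - B` has dimension at most `n`. -/
theorem ker_symm_sub_antisymm_dim_le (n : ℕ) (A B : Matrix (Fin (2*n)) (Fin (2*n)) ℝ)
    (hA : A.IsSymm) (hB : Bᵀ = -B) (hBinv : IsUnit B) :
    Module.finrank ℝ (LinearMap.ker (Matrix.toLin' (A - B))) ≤ n := by
  have hnondeg : B.toBilin'.Nondegenerate := nondegenerate_toBilin'_iff.mpr <|
    .of_det_mem_nonZeroDivisors ((isUnit_iff_isUnit_det B).mp hBinv).mem_nonZeroDivisors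
  have h := LinearMap.BilinForm.two_mul_finrank_le_of_le_orthogonal hnondeg
    (ker_toLin'_sub_le_orthogonal hA hB)
  rw [finrank_fin_fun] at h
  omega
end

section
/- The natural number solutions (k₁, k₂) ∈ ℕ × ℕ of the equation k₁²(8k₂ − 9) + k₁(8k₂² − 42k₂ + 36) + (−9k₂² + 36k₂ − 27) = 0 are exactly: the pairs with k₁ + k₂ = 3, together with (k₁,k₂) = (1,0) and (k₁,k₂) = (0,1). -/
/-!
Read as a quadratic in `k₁`, the left-hand side factors as
`(k₁ + k₂ - 3) * ((8k₂ - 9)k₁ - 9k₂ + 9)`. Multiplying the second factor by `8` turns its vanishing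
into `(8k₁ - 9)(8k₂ - 9) = 9`. For naturals, `k₁ ≥ 2` forces `8k₁ - 9 ≥ 7`, hence `8k₂ - 9 > 0`,
hence `k₂ ≥ 2` and the product is at least `49`; so `k₁, k₂ ≤ 1`, leaving `(1, 0)` and `(0, 1)`.
-/

theorem quadratic_eq_mul_factors {R : Type*} [CommRing R] (x y : R) :
    x ^ 2 * (8 * y - 9) + x * (8 * y ^ 2 - 42 * y + 36) + (-9 * y ^ 2 + 36 * y - 27)
      = (x + y - 3) * ((8 * y - 9) * x - 9 * y + 9) := by
  ring

theorem factor_eq_zero_iff_mul_eq_nine (x y : ℤ) :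
    (8 * y - 9) * x - 9 * y + 9 = 0 ↔ (8 * x - 9) * (8 * y - 9) = 9 := by
  have h8 : 8 * ((8 * y - 9) * x - 9 * y + 9) = (8 * x - 9) * (8 * y - 9) - 9 := by ring
  rw [← sub_eq_zero (a := (8 * x - 9) * (8 * y - 9)), ← h8, mul_eq_zero]
  simp

theorem le_one_of_mul_eq_nine {a b : ℕ} (h : (8 * (a : ℤ) - 9) * (8 * (b : ℤ) - 9) = 9) :
    a ≤ 1 := by
  by_contra! ha
  have ha7 : (7 : ℤ) ≤ 8 * a - 9 := by omega
  have hb_pos : 0 < 8 * (b : ℤ) - 9 :=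
    pos_of_mul_pos_right (a := 8 * (a : ℤ) - 9) (by rw [h]; norm_num) (by omega)
  have hb7 : (7 : ℤ) ≤ 8 * b - 9 := by omega
  nlinarith

theorem mul_eq_nine_iff (a b : ℕ) :
    (8 * (a : ℤ) - 9) * (8 * (b : ℤ) - 9) = 9 ↔ (a = 1 ∧ b = 0) ∨ (a = 0 ∧ b = 1) := by
  constructor
  · intro h
    have ha := le_one_of_mul_eq_nine h
    have hb := le_one_of_mul_eq_nine ((mul_comm _ _).trans h)
    interval_cases a <;> interval_cases b <;> revert h <;> norm_num
  · rintro (⟨rfl, rfl⟩ | ⟨rfl, rfl⟩) <;> norm_num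

/-- The natural number solutions of
`k₁²(8k₂-9) + k₁(8k₂²-42k₂+36) + (-9k₂²+36k₂-27) = 0` are exactly the pairs with
`k₁ + k₂ = 3`, together with `(1,0)` and `(0,1)`. -/
theorem nat_solutions_quadratic (k₁ k₂ : ℕ) :
    ((k₁ : ℤ) ^ 2 * (8 * (k₂ : ℤ) - 9) + (k₁ : ℤ) * (8 * (k₂ : ℤ) ^ 2 - 42 * (k₂ : ℤ) + 36)
        + (-9 * (k₂ : ℤ) ^ 2 + 36 * (k₂ : ℤ) - 27) = 0)
    ↔ (k₁ + k₂ = 3 ∨ (k₁ = 1 ∧ k₂ = 0) ∨ (k₁ = 0 ∧ k₂ = 1)) := by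
  rw [quadratic_eq_mul_factors, mul_eq_zero, factor_eq_zero_iff_mul_eq_nine, mul_eq_nine_iff]
  exact or_congr_left (by omega)
end
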